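/- Let $Q\subset\mathbb{R}^N$ be a cube, $s\in(0,1)$, $p\ge 1$, $c>0$, $\lambda,\delta\in(0,1)$, $\alpha\in(0,1)$, and let $u\in C(\overline{Q})$ satisfy $|Q\cap\{u\le\lambda c\}|\ge\delta|Q|$ and $|Q\cap\{u>\frac{\lambda+1}{2}c\}|\ge\frac{\alpha}{2}|Q|$. Then $\Big[\frac{\alpha(1-\lambda)c}{4N^{(N+ps)/(2p)}}\Big]^p\delta\,|Q|^{(N-ps)/N}\le\iint_{Q\times Q}\frac{|u(x)-u(y)|^p}{|x-y|^{N+ps}}\,dx\,dy.$ -/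

import Mathlib

open MeasureTheory ENNReal Set

noncomputable section

/-- The open axis-parallel cube in `ℝ^N` centered at `x` with side `r`. -/
def cube (N : ℕ) (x : EuclideanSpace ℝ (Fin N)) (r : ℝ) : Set (EuclideanSpace ℝ (Fin N)) :=
  {y | ∀ i, |y i - x i| < r / 2}

theorem stmt10 (N : ℕ) (hN : 1 ≤ N) (x₀ : EuclideanSpace ℝ (Fin N)) (ℓ s p c lam δ α : ℝ)
    (hℓ : 0 < ℓ) (hs : s ∈ Ioo (0:ℝ) 1) (hp : 1 ≤ p) (hc : 0 < c)
    (hlam : lam ∈ Ioo (0:ℝ) 1) (hδ : δ ∈ Ioo (0:ℝ) 1) (hα : α ∈ Ioo (0:ℝ) 1)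
    (u : EuclideanSpace ℝ (Fin N) → ℝ)
    (hu : ContinuousOn u (closure (cube N x₀ ℓ)))
    (hlow : ENNReal.ofReal (δ * ℓ ^ N) ≤ volume (cube N x₀ ℓ ∩ {y | u y ≤ lam * c}))
    (hlev : ENNReal.ofReal (α / 2 * ℓ ^ N) ≤
      volume (cube N x₀ ℓ ∩ {y | (lam + 1) / 2 * c < u y})) :
    ENNReal.ofReal ((α * (1 - lam) * c / (4 * (N : ℝ) ^ (((N : ℝ) + p * s) / (2 * p)))) ^ p *
        δ * (ℓ ^ N) ^ (((N : ℝ) - p * s) / (N : ℝ))) ≤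
      ∫⁻ x in cube N x₀ ℓ, ∫⁻ y in cube N x₀ ℓ,
        ENNReal.ofReal (|u x - u y| ^ p / ‖x - y‖ ^ ((N : ℝ) + p * s)) := by
  obtain ⟨hs0, hs1⟩ := hs
  obtain ⟨hlam0, hlam1⟩ := hlam
  obtain ⟨hδ0, hδ1⟩ := hδ
  obtain ⟨hα0, hα1⟩ := hα
  have hp0 : (0:ℝ) < p := one_pos.trans_le hp
  have hn0 : (0:ℝ) < (N:ℝ) := by exact_mod_cast hN
  have hps : (0:ℝ) < p * s := mul_pos hp0 hs0
  have he : (0:ℝ) < (N:ℝ) + p * s := by linarith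
  set Q : Set (EuclideanSpace ℝ (Fin N)) := cube N x₀ ℓ with hQdef
  have hQopen : IsOpen Q := by
    have hEq : Q = ⋂ i : Fin N, {y : EuclideanSpace ℝ (Fin N) | |y i - x₀ i| < ℓ / 2} := by
      ext y; simp [hQdef, cube, Set.mem_iInter]
    rw [hEq]
    refine isOpen_iInter_of_finite fun i => ?_
    have hcont : Continuous fun y : EuclideanSpace ℝ (Fin N) => |y i - x₀ i| :=
      (((continuous_apply i).comp (PiLp.continuous_ofLp 2 _)).sub continuous_const).abs
    exact isOpen_lt hcont continuous_const
  have hcu : ContinuousOn u Q := hu.mono subset_closure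
  set A : Set (EuclideanSpace ℝ (Fin N)) := Q ∩ {y | u y ≤ lam * c} with hAdef
  set B : Set (EuclideanSpace ℝ (Fin N)) := Q ∩ {y | (lam + 1) / 2 * c < u y} with hBdef
  have hBopen : IsOpen B := by
    have : B = Q ∩ u ⁻¹' Ioi ((lam + 1) / 2 * c) := rfl
    rw [this]
    exact hcu.isOpen_inter_preimage hQopen isOpen_Ioi
  have hAmeas : MeasurableSet A := by
    have hopen : IsOpen (Q ∩ u ⁻¹' Ioi (lam * c)) :=
      hcu.isOpen_inter_preimage hQopen isOpen_Ioi
    have : A = Q \ (Q ∩ u ⁻¹' Ioi (lam * c)) := by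
      ext y
      simp only [hAdef, Set.mem_inter_iff, Set.mem_setOf_eq, Set.mem_diff, Set.mem_preimage,
        Set.mem_Ioi]
      constructor
      · rintro ⟨h1, h2⟩; exact ⟨h1, fun h => absurd h.2 (not_lt.2 h2)⟩
      · rintro ⟨h1, h2⟩; exact ⟨h1, not_lt.1 fun h => h2 ⟨h1, h⟩⟩
    rw [this]
    exact hQopen.measurableSet.diff hopen.measurableSet
  -- diameter bound
  have hdist : ∀ x ∈ Q, ∀ y ∈ Q, ‖x - y‖ ≤ Real.sqrt N * ℓ := by
    intro x hx y hy
    rw [EuclideanSpace.norm_eq]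
    have hbound : ∀ i : Fin N, ‖(x - y) i‖ ^ 2 ≤ ℓ ^ 2 := by
      intro i
      have h1 : |x i - x₀ i| < ℓ / 2 := hx i
      have h2 : |y i - x₀ i| < ℓ / 2 := hy i
      have h1' := abs_lt.1 h1
      have h2' := abs_lt.1 h2
      have hxy : |x i - y i| ≤ ℓ := by
        rw [abs_le]; constructor <;> [linarith [h1'.1, h2'.2]; linarith [h1'.2, h2'.1]]
      have : ‖(x - y) i‖ = |x i - y i| := by
        simp [PiLp.sub_apply, Real.norm_eq_abs]
      rw [this]
      nlinarith [abs_nonneg (x i - y i)]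
    calc Real.sqrt (∑ i, ‖(x - y) i‖ ^ 2) ≤ Real.sqrt (∑ _i : Fin N, ℓ ^ 2) :=
          Real.sqrt_le_sqrt (Finset.sum_le_sum fun i _ => hbound i)
      _ = Real.sqrt ((N : ℝ) * ℓ ^ 2) := by rw [Finset.sum_const, Finset.card_univ]; simp [mul_comm]
      _ = Real.sqrt N * ℓ := by
          rw [Real.sqrt_mul (by positivity), Real.sqrt_sq hℓ.le]
  -- the constant
  set K : ℝ := ((1 - lam) * c / 2) ^ p / (Real.sqrt N * ℓ) ^ ((N : ℝ) + p * s) with hKdef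
  have h1lam : (0:ℝ) < (1 - lam) * c := mul_pos (by linarith) hc
  have hK0 : 0 ≤ K :=
    div_nonneg (Real.rpow_nonneg (by positivity) _)
      (Real.rpow_nonneg (by positivity) _)
  -- pointwise bound
  have hpoint : ∀ x ∈ B, ∀ y ∈ A,
      K ≤ |u x - u y| ^ p / ‖x - y‖ ^ ((N : ℝ) + p * s) := by
    intro x hx y hy
    have hux : (lam + 1) / 2 * c < u x := hx.2
    have huy : u y ≤ lam * c := hy.2
    have hgap : (1 - lam) * c / 2 ≤ u x - u y := by nlinarith
    have hgap0 : (0:ℝ) < (1 - lam) * c / 2 := by linarith [h1lam]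
    have habs : (1 - lam) * c / 2 ≤ |u x - u y| := hgap.trans (le_abs_self _)
    have hxyne : x ≠ y := by
      intro h; rw [h] at hux; linarith [hux.trans_le huy, hgap0]
    have hnorm0 : (0:ℝ) < ‖x - y‖ := by
      rw [norm_pos_iff]; exact sub_ne_zero_of_ne hxyne
    have hnormle : ‖x - y‖ ≤ Real.sqrt N * ℓ := hdist x hx.1 y hy.1
    rw [hKdef]
    apply div_le_div₀ (Real.rpow_nonneg (abs_nonneg _) _)
    · exact Real.rpow_le_rpow hgap0.le habs hp0.le
    · exact Real.rpow_pos_of_pos hnorm0 _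
    · exact Real.rpow_le_rpow hnorm0.le hnormle he.le
  -- key real inequality
  have key : (α * (1 - lam) * c / (4 * (N : ℝ) ^ (((N : ℝ) + p * s) / (2 * p)))) ^ p *
      δ * (ℓ ^ N) ^ (((N : ℝ) - p * s) / (N : ℝ)) ≤ K * (δ * ℓ ^ N) * (α / 2 * ℓ ^ N) := by
    have hnum : (α * (1 - lam) * c) ^ p = α ^ p * ((1 - lam) * c) ^ p := by
      rw [mul_assoc, Real.mul_rpow hα0.le h1lam.le]
    have hden : (4 * (N : ℝ) ^ (((N : ℝ) + p * s) / (2 * p))) ^ p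
        = (2:ℝ) ^ p * (2:ℝ) ^ p * (N : ℝ) ^ (((N : ℝ) + p * s) / 2) := by
      rw [Real.mul_rpow (by norm_num : (0:ℝ) ≤ 4) (Real.rpow_nonneg hn0.le _),
        ← Real.rpow_mul hn0.le,
        show ((N : ℝ) + p * s) / (2 * p) * p = ((N : ℝ) + p * s) / 2 by field_simp,
        show (4:ℝ) = 2 * 2 by norm_num,
        Real.mul_rpow (by norm_num : (0:ℝ) ≤ 2) (by norm_num : (0:ℝ) ≤ 2)]
    have hX : (α * (1 - lam) * c / (4 * (N : ℝ) ^ (((N : ℝ) + p * s) / (2 * p)))) ^ p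
        = α ^ p * ((1 - lam) * c) ^ p /
          ((2:ℝ) ^ p * (2:ℝ) ^ p * (N : ℝ) ^ (((N : ℝ) + p * s) / 2)) := by
      rw [Real.div_rpow (by nlinarith : (0:ℝ) ≤ α * (1 - lam) * c)
        (by positivity), hnum, hden]
    have hY : ((1 - lam) * c / 2) ^ p = ((1 - lam) * c) ^ p / (2:ℝ) ^ p :=
      Real.div_rpow h1lam.le (by norm_num) p
    have hZ : (Real.sqrt N * ℓ) ^ ((N : ℝ) + p * s)
        = (N : ℝ) ^ (((N : ℝ) + p * s) / 2) * ℓ ^ ((N : ℝ) + p * s) := by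
      rw [Real.mul_rpow (Real.sqrt_nonneg _) hℓ.le, Real.sqrt_eq_rpow,
        ← Real.rpow_mul hn0.le]
      congr 2
      ring
    have h1 : ((ℓ : ℝ) ^ N) ^ (((N : ℝ) - p * s) / (N : ℝ))
        = ℓ ^ ((N:ℝ)) * ℓ ^ ((N:ℝ)) / ℓ ^ ((N : ℝ) + p * s) := by
      rw [← Real.rpow_natCast ℓ N, ← Real.rpow_mul hℓ.le, ← Real.rpow_add hℓ,
        ← Real.rpow_sub hℓ]
      congr 1
      field_simp
      ring
    have hln : (ℓ : ℝ) ^ N = ℓ ^ ((N:ℝ)) := (Real.rpow_natCast ℓ N).symm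
    have h7 : α ^ p ≤ α / 2 * (2:ℝ) ^ p := by
      have hα2 : α = α / 2 * 2 := by ring
      have step : (α / 2) ^ p ≤ α / 2 := by
        have h := Real.rpow_le_rpow_of_exponent_ge (by linarith : (0:ℝ) < α / 2)
          (by linarith : α / 2 ≤ 1) hp
        rwa [Real.rpow_one] at h
      calc α ^ p = (α / 2) ^ p * (2:ℝ) ^ p := by
            rw [← Real.mul_rpow (by linarith) (by norm_num), ← hα2]
        _ ≤ α / 2 * (2:ℝ) ^ p :=
            mul_le_mul_of_nonneg_right step (by positivity)
    have hP : (0:ℝ) < (2:ℝ) ^ p := Real.rpow_pos_of_pos two_pos p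
    have hnn : (0:ℝ) < (N : ℝ) ^ (((N : ℝ) + p * s) / 2) := Real.rpow_pos_of_pos hn0 _
    have hle : (0:ℝ) < ℓ ^ ((N : ℝ) + p * s) := Real.rpow_pos_of_pos hℓ _
    have hlnp : (0:ℝ) < ℓ ^ ((N:ℝ)) := Real.rpow_pos_of_pos hℓ _
    have haa : (0:ℝ) < ((1 - lam) * c) ^ p := Real.rpow_pos_of_pos h1lam p
    rw [hKdef, hX, hY, hZ, h1, hln]
    set P : ℝ := (2:ℝ) ^ p
    set nn : ℝ := (N : ℝ) ^ (((N : ℝ) + p * s) / 2)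
    set aa : ℝ := ((1 - lam) * c) ^ p
    set ln : ℝ := ℓ ^ ((N:ℝ))
    set le' : ℝ := ℓ ^ ((N : ℝ) + p * s)
    have hmain := mul_le_mul_of_nonneg_right h7
      (show (0:ℝ) ≤ aa * δ * (ln * ln) / (P * P * nn * le') by positivity)
    calc α ^ p * aa / (P * P * nn) * δ * (ln * ln / le')
        = α ^ p * (aa * δ * (ln * ln) / (P * P * nn * le')) := by ring
      _ ≤ α / 2 * P * (aa * δ * (ln * ln) / (P * P * nn * le')) := hmain
      _ = aa / P / (nn * le') * (δ * ln) * (α / 2 * ln) := by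
          field_simp
  -- assemble
  have hAQ : A ⊆ Q := Set.inter_subset_left
  have hBQ : B ⊆ Q := Set.inter_subset_left
  calc ENNReal.ofReal ((α * (1 - lam) * c / (4 * (N : ℝ) ^ (((N : ℝ) + p * s) / (2 * p)))) ^ p *
        δ * (ℓ ^ N) ^ (((N : ℝ) - p * s) / (N : ℝ)))
      ≤ ENNReal.ofReal (K * (δ * ℓ ^ N) * (α / 2 * ℓ ^ N)) := ENNReal.ofReal_le_ofReal key
    _ = ENNReal.ofReal K * ENNReal.ofReal (δ * ℓ ^ N) * ENNReal.ofReal (α / 2 * ℓ ^ N) := by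
        rw [ENNReal.ofReal_mul (by positivity), ENNReal.ofReal_mul hK0]
    _ ≤ ENNReal.ofReal K * volume A * volume B := by
        exact mul_le_mul' (mul_le_mul' le_rfl hlow) hlev
    _ = ∫⁻ _x in B, ∫⁻ _y in A, ENNReal.ofReal K := by
        rw [setLIntegral_const, setLIntegral_const]
    _ ≤ ∫⁻ x in B, ∫⁻ y in A,
          ENNReal.ofReal (|u x - u y| ^ p / ‖x - y‖ ^ ((N : ℝ) + p * s)) := by
        refine setLIntegral_mono' hBopen.measurableSet fun x hx => ?_
        refine setLIntegral_mono' hAmeas fun y hy => ?_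
        exact ENNReal.ofReal_le_ofReal (hpoint x hx y hy)
    _ ≤ ∫⁻ x in Q, ∫⁻ y in Q,
          ENNReal.ofReal (|u x - u y| ^ p / ‖x - y‖ ^ ((N : ℝ) + p * s)) :=
        lintegral_mono' (Measure.restrict_mono hBQ le_rfl) fun x =>
          lintegral_mono' (Measure.restrict_mono hAQ le_rfl) le_rfl

end
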